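/- arXiv:1904.09474 — 3 statements merged into one kernel-verified Lean document; each statement's English description precedes it below -/
import Mathlib

section
/- For a unitary 4×4 matrix U, the matrix U Z₁ U† commutes with both Z₁ and Z₂ if and only if there exist complex numbers c₁, c₂, c₁₂ such that U Z₁ U† = c₁ Z₁ + c₂ Z₂ + c₁₂ Z₁Z₂. (The same equivalence holds with Z₁ replaced by Z₂ on the left-hand side.) -/
open Matrix Kronecker

/-- The Pauli-Z matrix `diag(1, -1)`. -/
noncomputable def PauliZ : Matrix (Fin 2) (Fin 2) ℂ := !![1, 0; 0, -1]

/-- `Z₁ = Z ⊗ I` on two qubits. -/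
noncomputable def Z1 : Matrix (Fin 2 × Fin 2) (Fin 2 × Fin 2) ℂ :=
  PauliZ ⊗ₖ (1 : Matrix (Fin 2) (Fin 2) ℂ)

/-- `Z₂ = I ⊗ Z` on two qubits. -/
noncomputable def Z2 : Matrix (Fin 2 × Fin 2) (Fin 2 × Fin 2) ℂ :=
  (1 : Matrix (Fin 2) (Fin 2) ℂ) ⊗ₖ PauliZ

noncomputable def d1 : Fin 2 × Fin 2 → ℂ := fun p => if p.1 = 0 then 1 else -1
noncomputable def d2 : Fin 2 × Fin 2 → ℂ := fun p => if p.2 = 0 then 1 else -1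

lemma Z1_diag : Z1 = Matrix.diagonal d1 := by
  ext ⟨i,j⟩ ⟨k,l⟩
  fin_cases i <;> fin_cases j <;> fin_cases k <;> fin_cases l <;>
    simp [Z1, PauliZ, d1, Matrix.diagonal, Matrix.one_apply, Prod.ext_iff]

lemma Z2_diag : Z2 = Matrix.diagonal d2 := by
  ext ⟨i,j⟩ ⟨k,l⟩
  fin_cases i <;> fin_cases j <;> fin_cases k <;> fin_cases l <;>
    simp [Z2, PauliZ, d2, Matrix.diagonal, Matrix.one_apply, Prod.ext_iff]

lemma aux_neg (x : ℂ) (h : -x = x) : x = 0 := by linear_combination -h/2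

lemma key (A : Matrix (Fin 2 × Fin 2) (Fin 2 × Fin 2) ℂ) (htr : A.trace = 0) :
    (A * Z1 = Z1 * A ∧ A * Z2 = Z2 * A) ↔
      ∃ c₁ c₂ c₁₂ : ℂ, A = c₁ • Z1 + c₂ • Z2 + c₁₂ • (Z1 * Z2) := by
  rw [Z1_diag, Z2_diag, Matrix.diagonal_mul_diagonal]
  constructor
  · rintro ⟨hc1, hc2⟩
    have h1 : ∀ i j, A i j * d1 j = d1 i * A i j := by
      intro i j
      have := congrFun (congrFun hc1 i) j
      simpa [Matrix.mul_diagonal, Matrix.diagonal_mul] using this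
    have h2 : ∀ i j, A i j * d2 j = d2 i * A i j := by
      intro i j
      have := congrFun (congrFun hc2 i) j
      simpa [Matrix.mul_diagonal, Matrix.diagonal_mul] using this
    have hz : ∀ x y : Fin 2 × Fin 2, x ≠ y → A x y = 0 := by
      rintro ⟨a,b⟩ ⟨c,d⟩ hne
      have ha := h1 (a,b) (c,d)
      have hb := h2 (a,b) (c,d)
      fin_cases a <;> fin_cases b <;> fin_cases c <;> fin_cases d <;>
        norm_num [d1, d2] at ha hb ⊢ <;>
        first
          | exact absurd rfl hne
          | exact aux_neg _ ha
          | exact aux_neg _ hb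
          | exact aux_neg _ ha.symm
          | exact aux_neg _ hb.symm
    have htr' : A (0,0) (0,0) + A (0,1) (0,1) + A (1,0) (1,0) + A (1,1) (1,1) = 0 := by
      simpa [Matrix.trace, Matrix.diag, Fintype.sum_prod_type, Fin.sum_univ_two,
        add_assoc] using htr
    have hdiagA : A = Matrix.diagonal (fun p => A p p) := by
      ext x y
      by_cases h : x = y
      · subst h; simp
      · rw [hz x y h, Matrix.diagonal_apply_ne _ h]
    refine ⟨(A (0,0) (0,0) + A (0,1) (0,1)) / 2, (A (0,0) (0,0) + A (1,0) (1,0)) / 2,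
      (A (0,0) (0,0) + A (1,1) (1,1)) / 2, ?_⟩
    conv_lhs => rw [hdiagA]
    rw [← Matrix.diagonal_smul, ← Matrix.diagonal_smul, ← Matrix.diagonal_smul,
      Matrix.diagonal_add, Matrix.diagonal_add]
    rw [Matrix.diagonal_eq_diagonal_iff]
    rintro ⟨i, j⟩
    fin_cases i <;> fin_cases j <;>
      · norm_num [d1, d2]
        first
          | linear_combination htr'/2
          | linear_combination -htr'/2
  · rintro ⟨c₁, c₂, c₁₂, rfl⟩
    constructor <;>
      · simp [Matrix.add_mul, Matrix.mul_add, Matrix.diagonal_mul_diagonal, mul_comm]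

/-- For a unitary 4×4 matrix `U`, `U Z₁ U†` commutes with both `Z₁` and `Z₂` if and only
if it is a complex linear combination of `Z₁`, `Z₂` and `Z₁Z₂`; the same equivalence
holds with `Z₁` replaced by `Z₂` on the left-hand side. -/
theorem conj_commutes_iff_pauli_combination
    (U : Matrix (Fin 2 × Fin 2) (Fin 2 × Fin 2) ℂ)
    (hU : U * Uᴴ = 1 ∧ Uᴴ * U = 1) :
    (((U * Z1 * Uᴴ) * Z1 = Z1 * (U * Z1 * Uᴴ) ∧ (U * Z1 * Uᴴ) * Z2 = Z2 * (U * Z1 * Uᴴ)) ↔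
      ∃ c₁ c₂ c₁₂ : ℂ, U * Z1 * Uᴴ = c₁ • Z1 + c₂ • Z2 + c₁₂ • (Z1 * Z2)) ∧
    (((U * Z2 * Uᴴ) * Z1 = Z1 * (U * Z2 * Uᴴ) ∧ (U * Z2 * Uᴴ) * Z2 = Z2 * (U * Z2 * Uᴴ)) ↔
      ∃ c₁ c₂ c₁₂ : ℂ, U * Z2 * Uᴴ = c₁ • Z1 + c₂ • Z2 + c₁₂ • (Z1 * Z2)) := by
  have htr1 : (U * Z1 * Uᴴ).trace = 0 := by
    rw [Matrix.trace_mul_comm, ← Matrix.mul_assoc, hU.2, Matrix.one_mul]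
    simp [Z1_diag, Matrix.trace, Matrix.diag, d1, Fintype.sum_prod_type, Fin.sum_univ_two]
  have htr2 : (U * Z2 * Uᴴ).trace = 0 := by
    rw [Matrix.trace_mul_comm, ← Matrix.mul_assoc, hU.2, Matrix.one_mul]
    simp [Z2_diag, Matrix.trace, Matrix.diag, d2, Fintype.sum_prod_type, Fin.sum_univ_two]
  exact ⟨key _ htr1, key _ htr2⟩
end

section
/- Let U be a unitary 4×4 matrix such that U Z₁ U† = r₁ Z₁ + r₂ Z₂ + r₁₂ Z₁Z₂ and U Z₂ U† = s₁ Z₁ + s₂ Z₂ + s₁₂ Z₁Z₂ for complex coefficients. Then the three vectors r = (r₁, r₂, r₁₂), s = (s₁, s₂, s₁₂) and t = (r₂ s₁₂ + s₂ r₁₂, r₁ s₁₂ + s₁ r₁₂, r₁ s₂ + s₁ r₂) are linearly independent in ℂ³; in particular, conjugation by U restricts to a bijective linear map of the span of {Z₁, Z₂, Z₁Z₂} onto itself. -/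
open Matrix Kronecker

lemma Z1Z1 : Z1 * Z1 = 1 := by
  ext ⟨i,j⟩ ⟨k,l⟩
  fin_cases i <;> fin_cases j <;> fin_cases k <;> fin_cases l <;>
    simp [Z1, PauliZ, Matrix.mul_apply, Matrix.one_apply, Fintype.sum_prod_type,
      Fin.sum_univ_two, Prod.ext_iff]

lemma Z2Z2 : Z2 * Z2 = 1 := by
  ext ⟨i,j⟩ ⟨k,l⟩
  fin_cases i <;> fin_cases j <;> fin_cases k <;> fin_cases l <;>
    simp [Z2, PauliZ, Matrix.mul_apply, Matrix.one_apply, Fintype.sum_prod_type,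
      Fin.sum_univ_two, Prod.ext_iff]

lemma Z1Z2comm : Z1 * Z2 = Z2 * Z1 := by
  ext ⟨i,j⟩ ⟨k,l⟩
  fin_cases i <;> fin_cases j <;> fin_cases k <;> fin_cases l <;>
    simp [Z1, Z2, PauliZ, Matrix.mul_apply, Matrix.one_apply, Fintype.sum_prod_type,
      Fin.sum_univ_two, Prod.ext_iff]

lemma traceZ1 : Z1.trace = 0 := by
  simp [Z1, PauliZ, Matrix.trace, Matrix.diag, Fintype.sum_prod_type, Fin.sum_univ_two]

lemma traceZ2 : Z2.trace = 0 := by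
  simp [Z2, PauliZ, Matrix.trace, Matrix.diag, Fintype.sum_prod_type, Fin.sum_univ_two]

lemma traceZ1Z2 : (Z1 * Z2).trace = 0 := by
  simp [Z1, Z2, PauliZ, Matrix.trace, Matrix.mul_apply, Matrix.diag, Fintype.sum_prod_type,
    Fin.sum_univ_two]

lemma li_helper (v : Fin 3 → Fin 3 → ℂ) (h : (Matrix.of v).det ≠ 0) :
    LinearIndependent ℂ v := by
  have := Matrix.linearIndependent_rows_iff_isUnit (K := ℂ) (A := Matrix.of v)
  rw [Matrix.isUnit_iff_isUnit_det, isUnit_iff_ne_zero] at this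
  exact this.2 h

/-- Helper: bijection of the span, given values on generators. -/
lemma bij_helper (U : Matrix (Fin 2 × Fin 2) (Fin 2 × Fin 2) ℂ)
    (hU : U * Uᴴ = 1 ∧ Uᴴ * U = 1) (a b c : ℂ)
    (ha : a ≠ 0) (hb : b ≠ 0) (hc : c ≠ 0)
    (W1 W2 W3 : Matrix (Fin 2 × Fin 2) (Fin 2 × Fin 2) ℂ)
    (h1 : U * Z1 * Uᴴ = a • W1) (h2 : U * Z2 * Uᴴ = b • W2)
    (h3 : U * (Z1 * Z2) * Uᴴ = c • W3)
    (hset : ({W1, W2, W3} : Set (Matrix (Fin 2 × Fin 2) (Fin 2 × Fin 2) ℂ))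
      = {Z1, Z2, Z1 * Z2}) :
    Set.BijOn (fun M => U * M * Uᴴ)
      (Submodule.span ℂ ({Z1, Z2, Z1 * Z2} :
        Set (Matrix (Fin 2 × Fin 2) (Fin 2 × Fin 2) ℂ)) : Set _)
      (Submodule.span ℂ ({Z1, Z2, Z1 * Z2} :
        Set (Matrix (Fin 2 × Fin 2) (Fin 2 × Fin 2) ℂ)) : Set _) := by
  have hS : ∃ S : Set (Matrix (Fin 2 × Fin 2) (Fin 2 × Fin 2) ℂ), S = {Z1, Z2, Z1 * Z2} :=
    ⟨_, rfl⟩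
  obtain ⟨S, hS⟩ := hS
  rw [← hS] at hset ⊢
  set T := Submodule.span ℂ S with hT
  have key : ∀ (P Q : Matrix (Fin 2 × Fin 2) (Fin 2 × Fin 2) ℂ),
      (∀ x ∈ S, P * x * Q ∈ T) → ∀ M ∈ T, P * M * Q ∈ T := by
    intro P Q h M hM
    induction hM using Submodule.span_induction with
    | mem x hx => exact h x hx
    | zero => simpa using Submodule.zero_mem T
    | add x y _ _ hx hy => simpa [mul_add, add_mul] using Submodule.add_mem T hx hy
    | smul t x _ hx =>
        simpa [Matrix.mul_smul, Matrix.smul_mul] using Submodule.smul_mem T t hx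
  have memZ1 : Z1 ∈ T := Submodule.subset_span (hS ▸ (by simp))
  have memZ2 : Z2 ∈ T := Submodule.subset_span (hS ▸ (by simp))
  have memZ3 : Z1 * Z2 ∈ T := Submodule.subset_span (hS ▸ (by simp))
  have memW1 : W1 ∈ T := Submodule.subset_span (hset ▸ (by simp : W1 ∈ ({W1, W2, W3} : Set _)))
  have memW2 : W2 ∈ T := Submodule.subset_span (hset ▸ (by simp : W2 ∈ ({W1, W2, W3} : Set _)))
  have memW3 : W3 ∈ T := Submodule.subset_span (hset ▸ (by simp : W3 ∈ ({W1, W2, W3} : Set _)))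
  have hf : ∀ M ∈ T, U * M * Uᴴ ∈ T := by
    apply key
    intro x hx
    rw [hS] at hx
    rcases hx with rfl | rfl | rfl
    · rw [h1]; exact Submodule.smul_mem T a memW1
    · rw [h2]; exact Submodule.smul_mem T b memW2
    · rw [h3]; exact Submodule.smul_mem T c memW3
  have inv1 : ∀ M, Uᴴ * (U * M * Uᴴ) * U = M := by
    intro M
    calc Uᴴ * (U * M * Uᴴ) * U = (Uᴴ * U) * M * (Uᴴ * U) := by
          simp only [Matrix.mul_assoc]
      _ = M := by rw [hU.2]; simp
  have inv2 : ∀ M, U * (Uᴴ * M * U) * Uᴴ = M := by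
    intro M
    calc U * (Uᴴ * M * U) * Uᴴ = (U * Uᴴ) * M * (U * Uᴴ) := by
          simp only [Matrix.mul_assoc]
      _ = M := by rw [hU.1]; simp
  have hg : ∀ M ∈ T, Uᴴ * M * U ∈ T := by
    apply key
    have gW1 : Uᴴ * W1 * U = a⁻¹ • Z1 := by
      have : Uᴴ * (U * Z1 * Uᴴ) * U = Uᴴ * (a • W1) * U := by rw [h1]
      rw [inv1, Matrix.mul_smul, Matrix.smul_mul] at this
      rw [this, smul_smul, inv_mul_cancel₀ ha, one_smul]
    have gW2 : Uᴴ * W2 * U = b⁻¹ • Z2 := by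
      have : Uᴴ * (U * Z2 * Uᴴ) * U = Uᴴ * (b • W2) * U := by rw [h2]
      rw [inv1, Matrix.mul_smul, Matrix.smul_mul] at this
      rw [this, smul_smul, inv_mul_cancel₀ hb, one_smul]
    have gW3 : Uᴴ * W3 * U = c⁻¹ • (Z1 * Z2) := by
      have : Uᴴ * (U * (Z1 * Z2) * Uᴴ) * U = Uᴴ * (c • W3) * U := by rw [h3]
      rw [inv1, Matrix.mul_smul, Matrix.smul_mul] at this
      rw [this, smul_smul, inv_mul_cancel₀ hc, one_smul]
    intro x hx
    rw [← hset] at hx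
    rcases hx with rfl | rfl | rfl
    · rw [gW1]; exact Submodule.smul_mem T _ memZ1
    · rw [gW2]; exact Submodule.smul_mem T _ memZ2
    · rw [gW3]; exact Submodule.smul_mem T _ memZ3
  exact Set.InvOn.bijOn (f' := fun M => Uᴴ * M * U)
    ⟨fun M _ => inv1 M, fun M _ => inv2 M⟩ hf hg

lemma Zprod13 : Z1 * (Z1 * Z2) = Z2 := by rw [← mul_assoc, Z1Z1, one_mul]
lemma Zprod23 : Z2 * (Z1 * Z2) = Z1 := by
  rw [Z1Z2comm, ← mul_assoc, Z2Z2, one_mul]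
lemma Zprod31 : (Z1 * Z2) * Z1 = Z2 := by
  rw [mul_assoc, ← Z1Z2comm, ← mul_assoc, Z1Z1, one_mul]
lemma Zprod32 : (Z1 * Z2) * Z2 = Z1 := by rw [mul_assoc, Z2Z2, mul_one]

lemma Zprod33 : (Z1 * Z2) * (Z1 * Z2) = 1 := by
  rw [← mul_assoc, Zprod31, Z2Z2]

lemma trichotomy (x y z : ℂ) (hxy : x * y = 0) (hxz : x * z = 0) (hyz : y * z = 0)
    (hsum : x ^ 2 + y ^ 2 + z ^ 2 = 1) :
    (y = 0 ∧ z = 0 ∧ x ≠ 0) ∨ (x = 0 ∧ z = 0 ∧ y ≠ 0) ∨ (x = 0 ∧ y = 0 ∧ z ≠ 0) := by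
  by_cases hx : x = 0
  · by_cases hy : y = 0
    · refine Or.inr (Or.inr ⟨hx, hy, fun hz => ?_⟩)
      rw [hx, hy, hz] at hsum; norm_num at hsum
    · exact Or.inr (Or.inl ⟨hx, (mul_eq_zero.mp hyz).resolve_left hy, hy⟩)
  · exact Or.inl ⟨(mul_eq_zero.mp hxy).resolve_left hx,
      (mul_eq_zero.mp hxz).resolve_left hx, hx⟩

set_option maxHeartbeats 2000000 in
/-- If a unitary `U` conjugates `Z₁` and `Z₂` into the span of `{Z₁, Z₂, Z₁Z₂}` with
coefficient vectors `r` and `s`, then the three vectors `r`, `s` and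
`t = (r₂s₁₂+s₂r₁₂, r₁s₁₂+s₁r₁₂, r₁s₂+s₁r₂)` are linearly independent in `ℂ³`;
in particular, conjugation by `U` restricts to a bijection of the span of
`{Z₁, Z₂, Z₁Z₂}` onto itself. -/
theorem coefficient_vectors_linearIndependent
    (U : Matrix (Fin 2 × Fin 2) (Fin 2 × Fin 2) ℂ)
    (hU : U * Uᴴ = 1 ∧ Uᴴ * U = 1)
    (r₁ r₂ r₁₂ s₁ s₂ s₁₂ : ℂ)
    (hr : U * Z1 * Uᴴ = r₁ • Z1 + r₂ • Z2 + r₁₂ • (Z1 * Z2))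
    (hs : U * Z2 * Uᴴ = s₁ • Z1 + s₂ • Z2 + s₁₂ • (Z1 * Z2)) :
    LinearIndependent ℂ
      ![![r₁, r₂, r₁₂], ![s₁, s₂, s₁₂],
        ![r₂ * s₁₂ + s₂ * r₁₂, r₁ * s₁₂ + s₁ * r₁₂, r₁ * s₂ + s₁ * r₂]] ∧
    Set.BijOn (fun M => U * M * Uᴴ)
      (Submodule.span ℂ ({Z1, Z2, Z1 * Z2} :
        Set (Matrix (Fin 2 × Fin 2) (Fin 2 × Fin 2) ℂ)) : Set _)
      (Submodule.span ℂ ({Z1, Z2, Z1 * Z2} :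
        Set (Matrix (Fin 2 × Fin 2) (Fin 2 × Fin 2) ℂ)) : Set _) := by
  have conj_mul : ∀ X Y : Matrix (Fin 2 × Fin 2) (Fin 2 × Fin 2) ℂ,
      (U * X * Uᴴ) * (U * Y * Uᴴ) = U * (X * Y) * Uᴴ := by
    intro X Y
    calc (U * X * Uᴴ) * (U * Y * Uᴴ) = U * (X * ((Uᴴ * U) * (Y * Uᴴ))) := by
          simp only [Matrix.mul_assoc]
      _ = U * (X * Y) * Uᴴ := by rw [hU.2, Matrix.one_mul]; simp only [Matrix.mul_assoc]
  have hA2 : (r₁ • Z1 + r₂ • Z2 + r₁₂ • (Z1 * Z2)) *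
      (r₁ • Z1 + r₂ • Z2 + r₁₂ • (Z1 * Z2)) = 1 := by
    rw [← hr, conj_mul, Z1Z1, Matrix.mul_one, hU.1]
  have hB2 : (s₁ • Z1 + s₂ • Z2 + s₁₂ • (Z1 * Z2)) *
      (s₁ • Z1 + s₂ • Z2 + s₁₂ • (Z1 * Z2)) = 1 := by
    rw [← hs, conj_mul, Z2Z2, Matrix.mul_one, hU.1]
  have e00 := congrFun (congrFun hA2 (0,0)) (0,0)
  have e01 := congrFun (congrFun hA2 (0,1)) (0,1)
  have e10 := congrFun (congrFun hA2 (1,0)) (1,0)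
  have e11 := congrFun (congrFun hA2 (1,1)) (1,1)
  simp [Z1, Z2, PauliZ, Matrix.mul_apply, Matrix.one_apply, Fintype.sum_prod_type,
    Fin.sum_univ_two, Prod.ext_iff] at e00 e01 e10 e11
  have f00 := congrFun (congrFun hB2 (0,0)) (0,0)
  have f01 := congrFun (congrFun hB2 (0,1)) (0,1)
  have f10 := congrFun (congrFun hB2 (1,0)) (1,0)
  have f11 := congrFun (congrFun hB2 (1,1)) (1,1)
  simp [Z1, Z2, PauliZ, Matrix.mul_apply, Matrix.one_apply, Fintype.sum_prod_type,
    Fin.sum_univ_two, Prod.ext_iff] at f00 f01 f10 f11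
  have hr12 : r₁ * r₂ = 0 := by linear_combination (e00 - e01 - e10 + e11)/8
  have hr13 : r₁ * r₁₂ = 0 := by linear_combination (e00 - e01 + e10 - e11)/8
  have hr23 : r₂ * r₁₂ = 0 := by linear_combination (e00 + e01 - e10 - e11)/8
  have hrsum : r₁ ^ 2 + r₂ ^ 2 + r₁₂ ^ 2 = 1 := by
    linear_combination (e00 + e01 + e10 + e11)/4
  have hs12 : s₁ * s₂ = 0 := by linear_combination (f00 - f01 - f10 + f11)/8
  have hs13 : s₁ * s₁₂ = 0 := by linear_combination (f00 - f01 + f10 - f11)/8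
  have hs23 : s₂ * s₁₂ = 0 := by linear_combination (f00 + f01 - f10 - f11)/8
  have hssum : s₁ ^ 2 + s₂ ^ 2 + s₁₂ ^ 2 = 1 := by
    linear_combination (f00 + f01 + f10 + f11)/4
  -- orthogonality via trace
  have hAB : (r₁ • Z1 + r₂ • Z2 + r₁₂ • (Z1 * Z2)) *
      (s₁ • Z1 + s₂ • Z2 + s₁₂ • (Z1 * Z2)) = U * (Z1 * Z2) * Uᴴ := by
    rw [← hr, ← hs, conj_mul]
  have horth : r₁ * s₁ + r₂ * s₂ + r₁₂ * s₁₂ = 0 := by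
    have ht := congrArg Matrix.trace hAB
    have htr : (U * (Z1 * Z2) * Uᴴ).trace = 0 := by
      rw [Matrix.trace_mul_comm, ← Matrix.mul_assoc, hU.2, Matrix.one_mul, traceZ1Z2]
    rw [htr] at ht
    simp only [add_mul, mul_add, smul_mul_assoc, mul_smul_comm, smul_smul] at ht
    rw [Z1Z1, Z2Z2, Zprod13, Zprod23, Zprod31, Zprod32, Zprod33, ← Z1Z2comm] at ht
    simp only [Matrix.trace_add, Matrix.trace_smul, traceZ1, traceZ2, traceZ1Z2,
      Matrix.trace_one, smul_eq_mul, smul_zero, Fintype.card_prod, Fintype.card_fin] at ht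
    push_cast at ht
    linear_combination ht/4
  rcases trichotomy r₁ r₂ r₁₂ hr12 hr13 hr23 hrsum with ⟨h1,h2,ha⟩|⟨h1,h2,ha⟩|⟨h1,h2,ha⟩ <;>
    rcases trichotomy s₁ s₂ s₁₂ hs12 hs13 hs23 hssum with ⟨g1,g2,hb⟩|⟨g1,g2,hb⟩|⟨g1,g2,hb⟩ <;>
    subst h1 <;> subst h2 <;> subst g1 <;> subst g2 <;>
    simp only [zero_smul, add_zero, zero_add, mul_zero, zero_mul] at hr hs horth
  · exact absurd horth (mul_ne_zero ha hb)
  · refine ⟨?_, ?_⟩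
    · apply li_helper
      rw [Matrix.det_fin_three]
      simp [mul_eq_zero, ha, hb]
    · have h3 : U * (Z1 * Z2) * Uᴴ = (r₁ * s₂) • (Z1 * Z2) := by
        rw [← conj_mul, hr, hs, smul_mul_assoc, mul_smul_comm, smul_smul]
      exact bij_helper U hU _ _ _ ha hb (mul_ne_zero ha hb) _ _ _ hr hs h3 rfl
  · refine ⟨?_, ?_⟩
    · apply li_helper
      rw [Matrix.det_fin_three]
      simp [mul_eq_zero, ha, hb]
    · have h3 : U * (Z1 * Z2) * Uᴴ = (r₁ * s₁₂) • (Z2) := by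
        rw [← conj_mul, hr, hs, smul_mul_assoc, mul_smul_comm, smul_smul, Zprod13]
      exact bij_helper U hU _ _ _ ha hb (mul_ne_zero ha hb) _ _ _ hr hs h3 (by ext x; simp only [Set.mem_insert_iff, Set.mem_singleton_iff]; tauto)
  · refine ⟨?_, ?_⟩
    · apply li_helper
      rw [Matrix.det_fin_three]
      simp [mul_eq_zero, ha, hb]
    · have h3 : U * (Z1 * Z2) * Uᴴ = (r₂ * s₁) • (Z1 * Z2) := by
        rw [← conj_mul, hr, hs, smul_mul_assoc, mul_smul_comm, smul_smul, ← Z1Z2comm]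
      exact bij_helper U hU _ _ _ ha hb (mul_ne_zero ha hb) _ _ _ hr hs h3 (by ext x; simp only [Set.mem_insert_iff, Set.mem_singleton_iff]; tauto)
  · exact absurd horth (mul_ne_zero ha hb)
  · refine ⟨?_, ?_⟩
    · apply li_helper
      rw [Matrix.det_fin_three]
      simp [mul_eq_zero, ha, hb]
    · have h3 : U * (Z1 * Z2) * Uᴴ = (r₂ * s₁₂) • (Z1) := by
        rw [← conj_mul, hr, hs, smul_mul_assoc, mul_smul_comm, smul_smul, Zprod23]
      exact bij_helper U hU _ _ _ ha hb (mul_ne_zero ha hb) _ _ _ hr hs h3 (by ext x; simp only [Set.mem_insert_iff, Set.mem_singleton_iff]; tauto)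
  · refine ⟨?_, ?_⟩
    · apply li_helper
      rw [Matrix.det_fin_three]
      simp [mul_eq_zero, ha, hb]
    · have h3 : U * (Z1 * Z2) * Uᴴ = (r₁₂ * s₁) • (Z2) := by
        rw [← conj_mul, hr, hs, smul_mul_assoc, mul_smul_comm, smul_smul, Zprod31]
      exact bij_helper U hU _ _ _ ha hb (mul_ne_zero ha hb) _ _ _ hr hs h3 (by ext x; simp only [Set.mem_insert_iff, Set.mem_singleton_iff]; tauto)
  · refine ⟨?_, ?_⟩
    · apply li_helper
      rw [Matrix.det_fin_three]
      simp [mul_eq_zero, ha, hb]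
    · have h3 : U * (Z1 * Z2) * Uᴴ = (r₁₂ * s₂) • (Z1) := by
        rw [← conj_mul, hr, hs, smul_mul_assoc, mul_smul_comm, smul_smul, Zprod32]
      exact bij_helper U hU _ _ _ ha hb (mul_ne_zero ha hb) _ _ _ hr hs h3 (by ext x; simp only [Set.mem_insert_iff, Set.mem_singleton_iff]; tauto)
  · exact absurd horth (mul_ne_zero ha hb)
end

section
/- The target-mode photon-loss error channel of the CNOT gate admits a two-operator Kraus decomposition with mixing angle r = ½ arcsin(2/π): for every 4×4 complex matrix ρ, ½ Z₂ ρ Z₂ + ½ Z₁Z₂ ρ Z₁Z₂ + (i/π) Z₁Z₂ ρ Z₂ − (i/π) Z₂ ρ Z₁Z₂ = A ρ A† + B ρ B†, where A = (1/√2)(cos r · I + i sin r · Z₁) Z₂ and B = (1/√2)(sin r · I + i cos r · Z₁) Z₂. -/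
open Matrix Kronecker

/-- The mixing angle `r = ½ arcsin(2/π)`. -/
noncomputable def mixAngle : ℝ := (1 / 2) * Real.arcsin (2 / Real.pi)

/-- The Kraus operator `A = (1/√2)(cos r · I + i sin r · Z₁) Z₂`. -/
noncomputable def KrausA : Matrix (Fin 2 × Fin 2) (Fin 2 × Fin 2) ℂ :=
  (((Real.sqrt 2 : ℝ) : ℂ)⁻¹) •
    ((((Real.cos mixAngle : ℝ) : ℂ) • (1 : Matrix (Fin 2 × Fin 2) (Fin 2 × Fin 2) ℂ)
        + (Complex.I * ((Real.sin mixAngle : ℝ) : ℂ)) • Z1) * Z2)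

/-- The Kraus operator `B = (1/√2)(sin r · I + i cos r · Z₁) Z₂`. -/
noncomputable def KrausB : Matrix (Fin 2 × Fin 2) (Fin 2 × Fin 2) ℂ :=
  (((Real.sqrt 2 : ℝ) : ℂ)⁻¹) •
    ((((Real.sin mixAngle : ℝ) : ℂ) • (1 : Matrix (Fin 2 × Fin 2) (Fin 2 × Fin 2) ℂ)
        + (Complex.I * ((Real.cos mixAngle : ℝ) : ℂ)) • Z1) * Z2)


lemma kron_ct (A B : Matrix (Fin 2) (Fin 2) ℂ) : (A ⊗ₖ B)ᴴ = Aᴴ ⊗ₖ Bᴴ := by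
  ext ⟨i,j⟩ ⟨k,l⟩
  simp [Matrix.conjTranspose_apply, mul_comm]

lemma hPZ : PauliZᴴ = PauliZ := by
  ext i j
  fin_cases i <;> fin_cases j <;> simp [PauliZ]

lemma hZ1 : Z1ᴴ = Z1 := by rw [Z1, kron_ct, hPZ, Matrix.conjTranspose_one]
lemma hZ2 : Z2ᴴ = Z2 := by rw [Z2, kron_ct, hPZ, Matrix.conjTranspose_one]

lemma hcomm : Z2 * Z1 = Z1 * Z2 := by
  rw [Z1, Z2, ← Matrix.mul_kronecker_mul, ← Matrix.mul_kronecker_mul]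
  simp

lemma hswap (X : Matrix (Fin 2 × Fin 2) (Fin 2 × Fin 2) ℂ) :
    Z2 * (Z1 * X) = Z1 * (Z2 * X) := by rw [← mul_assoc, hcomm, mul_assoc]

lemma hsc : (Real.sin mixAngle : ℂ) * (Real.cos mixAngle : ℂ) = 1 / (Real.pi : ℂ) := by
  have hπ : (0:ℝ) < Real.pi := Real.pi_pos
  have h1 : Real.sin (2 * mixAngle) = 2 / Real.pi := by
    rw [mixAngle, show 2 * ((1/2 : ℝ) * Real.arcsin (2 / Real.pi)) = Real.arcsin (2 / Real.pi) by ring]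
    refine Real.sin_arcsin (le_trans (by norm_num) (by positivity : (0:ℝ) ≤ 2 / Real.pi)) ?_
    rw [div_le_one hπ]
    linarith [Real.pi_gt_three]
  rw [Real.sin_two_mul] at h1
  have : Real.sin mixAngle * Real.cos mixAngle = 1 / Real.pi := by
    field_simp at h1 ⊢; linarith
  rw [← Complex.ofReal_mul, this]
  push_cast
  ring

lemma hcs : (Real.cos mixAngle : ℂ)^2 + (Real.sin mixAngle : ℂ)^2 = 1 := by
  rw [← Complex.ofReal_pow, ← Complex.ofReal_pow, ← Complex.ofReal_add,
    Real.cos_sq_add_sin_sq]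
  norm_num

lemma hw : ((Real.sqrt 2 : ℝ) : ℂ)⁻¹ * ((Real.sqrt 2 : ℝ) : ℂ)⁻¹ = 1/2 := by
  rw [← mul_inv, ← Complex.ofReal_mul, Real.mul_self_sqrt (by norm_num)]
  norm_num


/-- The target-mode photon-loss error channel of the CNOT gate admits a two-operator
Kraus decomposition with mixing angle `r = ½ arcsin(2/π)`:
`½ Z₂ρZ₂ + ½ Z₁Z₂ρZ₁Z₂ + (i/π) Z₁Z₂ρZ₂ − (i/π) Z₂ρZ₁Z₂ = AρA† + BρB†`. -/
theorem CNOT_photon_loss_Kraus (ρ : Matrix (Fin 2 × Fin 2) (Fin 2 × Fin 2) ℂ) :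
    ((1 : ℂ) / 2) • (Z2 * ρ * Z2)
      + ((1 : ℂ) / 2) • ((Z1 * Z2) * ρ * (Z1 * Z2))
      + (Complex.I / (Real.pi : ℂ)) • ((Z1 * Z2) * ρ * Z2)
      - (Complex.I / (Real.pi : ℂ)) • (Z2 * ρ * (Z1 * Z2))
    = KrausA * ρ * KrausAᴴ + KrausB * ρ * KrausBᴴ := by
  simp only [KrausA, KrausB, Matrix.conjTranspose_smul, Matrix.conjTranspose_mul,
    Matrix.conjTranspose_add, Matrix.conjTranspose_one, hZ1, hZ2,
    Complex.star_def, _root_.map_mul, Complex.conj_ofReal, Complex.conj_I, map_inv₀]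
  simp only [Matrix.smul_mul, Matrix.mul_smul, Matrix.add_mul, Matrix.mul_add,
    smul_smul, smul_add, Matrix.one_mul, Matrix.mul_one, mul_assoc, hswap, hcomm]
  have hw2 : ((Real.sqrt 2 : ℝ) : ℂ)⁻¹ ^ 2 = 1/2 := by rw [sq]; exact hw
  match_scalars <;>
    simp only [← Complex.ofReal_sin, ← Complex.ofReal_cos, _root_.map_mul,
      Complex.conj_ofReal, Complex.conj_I, mul_one] <;> ring_nf
  · rw [hw2]; linear_combination (-1/2 : ℂ) * hcs
  · rw [hw2, Complex.I_sq]; linear_combination (-1/2 : ℂ) * hcs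
  · rw [hw2]; linear_combination (-Complex.I) * hsc
  · rw [hw2]; linear_combination Complex.I * hsc
end
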